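/- Let α and η' be real numbers with 0 < α < 1, and set τ̃ = (1/2)·[[2−α², αη'],[αη', α²]], L₀ = [[1/√(2−α²), 0],[0, 1]], L₁ = [[0,0],[√((1−α²)/(2−α²)), 0]] as 2×2 complex matrices. Then L₀ᴴL₀ + L₁ᴴL₁ = I₂, and L₀ τ̃ L₀ᴴ + L₁ τ̃ L₁ᴴ = Σ( αη'/√(2−α²) ). -/

import Mathlib

open Matrix

noncomputable def SigmaState (x : ℝ) : Matrix (Fin 2) (Fin 2) ℂ :=
  !![1 / 2, x / 2; x / 2, 1 / 2]

noncomputable def tauTilde (α η' : ℝ) : Matrix (Fin 2) (Fin 2) ℂ :=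
  (1 / 2 : ℂ) • (!![2 - α ^ 2, α * η'; α * η', α ^ 2] : Matrix (Fin 2) (Fin 2) ℂ)

noncomputable def L0 (α : ℝ) : Matrix (Fin 2) (Fin 2) ℂ :=
  !![1 / Real.sqrt (2 - α ^ 2), 0; 0, 1]

noncomputable def L1 (α : ℝ) : Matrix (Fin 2) (Fin 2) ℂ :=
  !![0, 0; Real.sqrt ((1 - α ^ 2) / (2 - α ^ 2)), 0]

/-! $L_0, L_1$ are amplitude-damping Kraus operators sending $|0⟩$ towards $|1⟩$, with damping
rate $(1-α^2)/(2-α^2)$. Such a pair is trace preserving exactly when $|a|^2 + |c|^2 = 1$, and it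
maps a state with populations $p, r$ and coherence $q$ to populations $|a|^2 p$, $r + |c|^2 p$ and
coherence $a q$. For $\tilde τ$ this gives populations $1/2, 1/2$ and coherence
$αη'/(2\sqrt{2-α^2})$. -/

section Damping

variable {R : Type*} [Semiring R] [StarRing R]

theorem conjTranspose_mul_self_add_damping (a c : R) :
    (!![a, 0; 0, 1])ᴴ * !![a, 0; 0, 1] + (!![0, 0; c, 0])ᴴ * !![0, 0; c, 0] =
      !![star a * a + star c * c, 0; 0, 1] := by
  ext i j; fin_cases i <;> fin_cases j <;> simp [Matrix.mul_apply, Fin.sum_univ_two]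

theorem mul_mul_conjTranspose_add_damping (a c p q q' r : R) :
    !![a, 0; 0, 1] * !![p, q; q', r] * (!![a, 0; 0, 1])ᴴ +
        !![0, 0; c, 0] * !![p, q; q', r] * (!![0, 0; c, 0])ᴴ =
      !![a * p * star a, a * q; q' * star a, r + c * p * star c] := by
  ext i j; fin_cases i <;> fin_cases j <;> simp [vecMul, dotProduct, Fin.sum_univ_two]

end Damping

theorem tauTilde_eq (α η' : ℝ) :
    tauTilde α η' = !![(2 - α ^ 2 : ℂ) / 2, α * η' / 2; α * η' / 2, α ^ 2 / 2] := by
  ext i j; fin_cases i <;> fin_cases j <;> simp [tauTilde] <;> ring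

theorem catalyst_restoring_channel (α η' : ℝ) (h0 : 0 < α) (h1 : α < 1) :
    (L0 α)ᴴ * L0 α + (L1 α)ᴴ * L1 α = 1 ∧
    L0 α * tauTilde α η' * (L0 α)ᴴ + L1 α * tauTilde α η' * (L1 α)ᴴ
      = SigmaState (α * η' / Real.sqrt (2 - α ^ 2)) := by
  have h2 : 0 < 2 - α ^ 2 := by nlinarith
  have h2c : (2 - α ^ 2 : ℂ) ≠ 0 := by exact_mod_cast h2.ne'
  set s : ℂ := ((√(2 - α ^ 2) : ℝ) : ℂ) with hs_def
  set c : ℂ := ((√((1 - α ^ 2) / (2 - α ^ 2)) : ℝ) : ℂ) with hc_def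
  have hs : 1 / s * (1 / s) = 1 / (2 - α ^ 2) := by
    rw [div_mul_div_comm, one_mul, hs_def]
    exact_mod_cast congrArg (1 / ·) (Real.mul_self_sqrt h2.le)
  have hc : c * c = (1 - α ^ 2) / (2 - α ^ 2) := by
    rw [hc_def]
    exact_mod_cast Real.mul_self_sqrt (div_nonneg (by nlinarith) h2.le)
  constructor
  · have hsum : 1 / s * (1 / s) + c * c = 1 := by
      rw [hs, hc]; field_simp; ring
    rw [L0, L1, conjTranspose_mul_self_add_damping, one_fin_two]
    simp only [Complex.star_def, Complex.conj_ofReal, map_div₀, map_one]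
    rw [hsum]
  · have e00 : 1 / s * ((2 - α ^ 2) / 2) * (1 / s) = 1 / 2 := by
      rw [mul_right_comm, hs]; field_simp
    have e01 : 1 / s * (α * η' / 2) = ((α * η' / √(2 - α ^ 2) : ℝ) : ℂ) / 2 := by
      push_cast; ring
    have e10 : α * η' / 2 * (1 / s) = ((α * η' / √(2 - α ^ 2) : ℝ) : ℂ) / 2 := by
      push_cast; ring
    have e11 : α ^ 2 / 2 + c * ((2 - α ^ 2) / 2) * c = 1 / 2 := by
      rw [mul_right_comm, hc]; field_simp; ring
    rw [L0, L1, tauTilde_eq, mul_mul_conjTranspose_add_damping, SigmaState]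
    simp only [Complex.star_def, Complex.conj_ofReal, map_div₀, map_one]
    rw [e00, e01, e10, e11]
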